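/- arXiv:2409.04152 — 2 statements merged into one kernel-verified Lean document; each statement's English description precedes it below -/
import Mathlib

section
/- Hanan's theorem (d = 2): For any finite set of terminals T ⊂ ℝ², there exists a minimum-length rectilinear (ℓ₁) Steiner tree all of whose Steiner points lie on the Hanan grid, i.e., every Steiner point has x-coordinate equal to the x-coordinate of some terminal and y-coordinate equal to the y-coordinate of some terminal. -/
/-- A Steiner tree for the terminal set `T ⊂ ℝ^d`: a finite tree embedded in
`ℝ^d` whose vertex set covers all terminals. -/
structure SteinerTree (d : ℕ) (T : Finset (Fin d → ℝ)) where
  n : ℕ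
  G : SimpleGraph (Fin n)
  connected : G.Connected
  acyclic : G.IsAcyclic
  pos : Fin n → (Fin d → ℝ)
  hT : ∀ t ∈ T, ∃ i, pos i = t

open scoped Classical in
/-- Total length of the tree: each (undirected) edge `{i,j}` contributes `ν (pos i - pos j)`. -/
noncomputable def SteinerTree.len {d : ℕ} {T : Finset (Fin d → ℝ)}
    (ν : (Fin d → ℝ) → ℝ) (S : SteinerTree d T) : ℝ :=
  (∑ i, ∑ j, if S.G.Adj i j then ν (S.pos i - S.pos j) else 0) / 2

/-- Degree of a vertex. -/
noncomputable def SteinerTree.degree {d : ℕ} {T : Finset (Fin d → ℝ)}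
    (S : SteinerTree d T) (i : Fin S.n) : ℕ :=
  Nat.card {j // S.G.Adj i j}

/-- The ℓ₁ norm on `ℝ^d`. -/
noncomputable def l1norm {d : ℕ} (x : Fin d → ℝ) : ℝ := ∑ k, |x k|

open scoped Classical


noncomputable def cost1 {n : ℕ} (w : Fin n → Fin n → ℝ) (f : Fin n → ℝ) : ℝ :=
  ∑ i, ∑ j, w i j * |f i - f j|

lemma cost1_upd_le {n : ℕ} (w : Fin n → Fin n → ℝ) (hw : ∀ i j, 0 ≤ w i j)
    (f : Fin n → ℝ) (c c' : ℝ)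
    (h : ∀ a, (∃ j, f j = a) → a ≠ c → |c' - a| ≤ |c - a|) :
    cost1 w (fun i => if f i = c then c' else f i) ≤ cost1 w f := by
  unfold cost1
  refine Finset.sum_le_sum fun i _ => Finset.sum_le_sum fun j _ => ?_
  refine mul_le_mul_of_nonneg_left ?_ (hw i j)
  by_cases hi : f i = c <;> by_cases hj : f j = c
  · simp [hi, hj]
  · simp only [if_pos hi, if_neg hj]
    rw [hi]
    exact h (f j) ⟨j, rfl⟩ hj
  · simp only [if_pos hj, if_neg hi]
    rw [hj, abs_sub_comm (f i) c', abs_sub_comm (f i) c]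
    exact h (f i) ⟨i, rfl⟩ hi
  · simp [if_neg hi, if_neg hj]

lemma cost1_upd_convex {n : ℕ} (w : Fin n → Fin n → ℝ) (hw : ∀ i j, 0 ≤ w i j)
    (f : Fin n → ℝ) (c l r lam : ℝ)
    (h : ∀ a, (∃ j, f j = a) → a ≠ c → |c - a| = lam * |l - a| + (1 - lam) * |r - a|) :
    cost1 w f
      = lam * cost1 w (fun i => if f i = c then l else f i)
        + (1 - lam) * cost1 w (fun i => if f i = c then r else f i) := by
  unfold cost1
  rw [Finset.mul_sum, Finset.mul_sum, ← Finset.sum_add_distrib]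
  refine Finset.sum_congr rfl fun i _ => ?_
  rw [Finset.mul_sum, Finset.mul_sum, ← Finset.sum_add_distrib]
  refine Finset.sum_congr rfl fun j _ => ?_
  by_cases hi : f i = c <;> by_cases hj : f j = c
  · simp [hi, hj]
  · simp only [if_pos hi, if_neg hj]
    rw [hi]
    have := h (f j) ⟨j, rfl⟩ hj
    rw [this]; ring
  · simp only [if_pos hj, if_neg hi]
    rw [hj, abs_sub_comm (f i) c, abs_sub_comm (f i) l, abs_sub_comm (f i) r]
    have := h (f i) ⟨i, rfl⟩ hi
    rw [this]; ring
  · simp only [if_neg hi, if_neg hj]; ring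

lemma snap_step {n : ℕ} (w : Fin n → Fin n → ℝ) (hw : ∀ i j, 0 ≤ w i j)
    (A : Finset ℝ) (hA : A.Nonempty) (f : Fin n → ℝ) (c : ℝ)
    (hcA : c ∉ A) :
    ∃ c' ∈ ((Finset.image f Finset.univ).erase c ∪ A),
      cost1 w (fun i => if f i = c then c' else f i) ≤ cost1 w f := by
  set B := ((Finset.image f Finset.univ).erase c ∪ A) with hB
  have hBmem : ∀ j : Fin n, f j ≠ c → f j ∈ B := fun j hj =>
    Finset.mem_union_left _ (Finset.mem_erase.2 ⟨hj, Finset.mem_image_of_mem f (Finset.mem_univ j)⟩)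
  have hABsub : A ⊆ B := Finset.subset_union_right
  have hcB : c ∉ B := by
    intro hc
    rcases Finset.mem_union.1 hc with h | h
    · exact (Finset.mem_erase.1 h).1 rfl
    · exact hcA h
  have hBne : B.Nonempty := hA.mono hABsub
  set Blo := B.filter (· < c) with hBlo
  set Bhi := B.filter (c < ·) with hBhi
  have hsplit : ∀ b ∈ B, b ∈ Blo ∨ b ∈ Bhi := by
    intro b hb
    rcases lt_trichotomy b c with h | h | h
    · exact Or.inl (Finset.mem_filter.2 ⟨hb, h⟩)
    · exact absurd (h ▸ hb) hcB
    · exact Or.inr (Finset.mem_filter.2 ⟨hb, h⟩)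
  by_cases hlo : Blo.Nonempty <;> by_cases hhi : Bhi.Nonempty
  · -- both sides: convex combination
    set l := Blo.max' hlo with hl
    set r := Bhi.min' hhi with hr
    have hlB : l ∈ B := (Finset.mem_filter.1 (Blo.max'_mem hlo)).1
    have hrB : r ∈ B := (Finset.mem_filter.1 (Bhi.min'_mem hhi)).1
    have hlc : l < c := (Finset.mem_filter.1 (Blo.max'_mem hlo)).2
    have hcr : c < r := (Finset.mem_filter.1 (Bhi.min'_mem hhi)).2
    have hlmax : ∀ b ∈ B, b < c → b ≤ l := fun b hb h =>
      Blo.le_max' b (Finset.mem_filter.2 ⟨hb, h⟩)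
    have hrmin : ∀ b ∈ B, c < b → r ≤ b := fun b hb h =>
      Bhi.min'_le b (Finset.mem_filter.2 ⟨hb, h⟩)
    have hrl : r - l > 0 := by linarith
    obtain ⟨lam, hlam0, hlam1, hclam⟩ :
        ∃ lam : ℝ, 0 ≤ lam ∧ lam ≤ 1 ∧ lam * l + (1 - lam) * r = c := by
      refine ⟨(r - c) / (r - l), div_nonneg (by linarith) (by linarith), ?_, ?_⟩
      · rw [div_le_one hrl]; linarith
      · field_simp
        ring
    have key : ∀ a, (∃ j, f j = a) → a ≠ c →
        |c - a| = lam * |l - a| + (1 - lam) * |r - a| := by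
      rintro a ⟨j, rfl⟩ ha
      have haB := hBmem j ha
      rcases hsplit _ haB with h | h
      · have h1 : f j ≤ l := hlmax _ haB (Finset.mem_filter.1 h).2
        rw [abs_of_nonneg (by linarith), abs_of_nonneg (by linarith),
          abs_of_nonneg (by linarith)]
        linear_combination -hclam
      · have h1 : r ≤ f j := hrmin _ haB (Finset.mem_filter.1 h).2
        rw [abs_of_nonpos (by linarith), abs_of_nonpos (by linarith),
          abs_of_nonpos (by linarith)]
        linear_combination hclam
    have hconv := cost1_upd_convex w hw f c l r lam key
    by_cases hcmp : cost1 w (fun i => if f i = c then l else f i)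
        ≤ cost1 w (fun i => if f i = c then r else f i)
    · exact ⟨l, hlB, by nlinarith⟩
    · exact ⟨r, hrB, by nlinarith⟩
  · -- only lower side
    set l := Blo.max' hlo with hl
    have hlB : l ∈ B := (Finset.mem_filter.1 (Blo.max'_mem hlo)).1
    have hlc : l < c := (Finset.mem_filter.1 (Blo.max'_mem hlo)).2
    refine ⟨l, hlB, cost1_upd_le w hw f c l ?_⟩
    rintro a ⟨j, rfl⟩ ha
    have haB := hBmem j ha
    have h : f j ∈ Blo := (hsplit _ haB).resolve_right (fun h => hhi ⟨_, h⟩)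
    have h1 : f j ≤ l := Blo.le_max' _ h
    rw [abs_of_nonneg (by linarith), abs_of_nonneg (by linarith)]
    linarith
  · -- only upper side
    set r := Bhi.min' hhi with hr
    have hrB : r ∈ B := (Finset.mem_filter.1 (Bhi.min'_mem hhi)).1
    have hcr : c < r := (Finset.mem_filter.1 (Bhi.min'_mem hhi)).2
    refine ⟨r, hrB, cost1_upd_le w hw f c r ?_⟩
    rintro a ⟨j, rfl⟩ ha
    have haB := hBmem j ha
    have h : f j ∈ Bhi := (hsplit _ haB).resolve_left (fun h => hlo ⟨_, h⟩)
    have h1 : r ≤ f j := Bhi.min'_le _ h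
    rw [abs_of_nonpos (by linarith), abs_of_nonpos (by linarith)]
    linarith
  · exact absurd (hsplit _ hBne.choose_spec) (by push_neg; exact ⟨fun h => hlo ⟨_, h⟩, fun h => hhi ⟨_, h⟩⟩)

lemma snap_main {n : ℕ} (w : Fin n → Fin n → ℝ) (hw : ∀ i j, 0 ≤ w i j)
    (A : Finset ℝ) (hA : A.Nonempty) :
    ∀ (m : ℕ) (f : Fin n → ℝ), ((Finset.image f Finset.univ) \ A).card ≤ m →
    ∃ g : Fin n → ℝ, (∀ i, g i ∈ A) ∧ (∀ i, f i ∈ A → g i = f i) ∧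
      cost1 w g ≤ cost1 w f := by
  intro m
  induction m with
  | zero =>
    intro f hf
    have hsub : Finset.image f Finset.univ \ A = ∅ := Finset.card_eq_zero.1 (Nat.le_zero.1 hf)
    have hall : ∀ i, f i ∈ A := by
      intro i
      by_contra hi
      exact (Finset.eq_empty_iff_forall_notMem.1 hsub (f i))
        (Finset.mem_sdiff.2 ⟨Finset.mem_image_of_mem f (Finset.mem_univ i), hi⟩)
    exact ⟨f, hall, fun _ _ => rfl, le_refl _⟩
  | succ m ih =>
    intro f hf
    by_cases hall : ∀ i, f i ∈ A
    · exact ⟨f, hall, fun _ _ => rfl, le_refl _⟩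
    · push_neg at hall
      obtain ⟨i₀, hi₀⟩ := hall
      set c := f i₀ with hc
      obtain ⟨c', hc'B, hcost⟩ := snap_step w hw A hA f c hi₀
      set f' := fun i => if f i = c then c' else f i with hf'
      have hcmem : c ∈ Finset.image f Finset.univ \ A :=
        Finset.mem_sdiff.2 ⟨Finset.mem_image_of_mem f (Finset.mem_univ i₀), hi₀⟩
      have hsub : Finset.image f' Finset.univ \ A ⊆ (Finset.image f Finset.univ \ A).erase c := by
        intro v hv
        obtain ⟨hv1, hv2⟩ := Finset.mem_sdiff.1 hv
        obtain ⟨i, _, hvi⟩ := Finset.mem_image.1 hv1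
        by_cases hi : f i = c
        · have hvc' : v = c' := by rw [← hvi]; simp [hf', hi]
          subst hvc'
          rcases Finset.mem_union.1 hc'B with h | h
          · obtain ⟨hne, hmem⟩ := Finset.mem_erase.1 h
            exact Finset.mem_erase.2 ⟨hne, Finset.mem_sdiff.2 ⟨hmem, hv2⟩⟩
          · exact absurd h hv2
        · have hvf : v = f i := by rw [← hvi]; simp [hf', hi]
          subst hvf
          exact Finset.mem_erase.2 ⟨hi,
            Finset.mem_sdiff.2 ⟨Finset.mem_image_of_mem f (Finset.mem_univ i), hv2⟩⟩
      have hcard : (Finset.image f' Finset.univ \ A).card ≤ m := by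
        have h1 := Finset.card_le_card hsub
        rw [Finset.card_erase_of_mem hcmem] at h1
        omega
      obtain ⟨g, hg1, hg2, hg3⟩ := ih f' hcard
      refine ⟨g, hg1, ?_, hg3.trans hcost⟩
      intro i hfi
      have hne : f i ≠ c := fun h => hi₀ (h ▸ hfi)
      have : f' i = f i := by simp [hf', hne]
      rw [hg2 i (this ▸ hfi), this]


def starGraph (n : ℕ) : SimpleGraph (Fin (n + 1)) where
  Adj a b := a ≠ b ∧ (a = 0 ∨ b = 0)
  symm := by
    constructor
    rintro a b ⟨h1, h2⟩
    exact ⟨h1.symm, h2.symm⟩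
  loopless := ⟨fun a h => h.1 rfl⟩

lemma starGraph_connected (n : ℕ) : (starGraph n).Connected := by
  rw [SimpleGraph.connected_iff]
  refine ⟨?_, ⟨0⟩⟩
  have key : ∀ a : Fin (n + 1), (starGraph n).Reachable a 0 := by
    intro a
    by_cases ha : a = 0
    · exact ha ▸ SimpleGraph.Reachable.refl _
    · exact (SimpleGraph.Adj.reachable ⟨ha, Or.inr rfl⟩)
  intro a b
  exact (key a).trans (key b).symm

lemma starGraph_no_adj (n : ℕ) (u x : Fin (n + 1)) (hu : u ≠ 0) :
    ¬ ((starGraph n) \ SimpleGraph.fromEdgeSet {s(u, (0 : Fin (n + 1)))}).Adj u x := by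
  rintro ⟨⟨hne, h0⟩, hdel⟩
  have hx : x = 0 := h0.resolve_left hu
  subst hx
  exact hdel ((SimpleGraph.fromEdgeSet_adj _).2 ⟨rfl, hne⟩)

lemma starGraph_acyclic (n : ℕ) : (starGraph n).IsAcyclic := by
  rw [SimpleGraph.isAcyclic_iff_forall_adj_isBridge]
  intro v w hadj
  rw [SimpleGraph.isBridge_iff]
  obtain ⟨hne, h0⟩ := hadj
  rcases h0 with hv | hw
  · subst hv
    intro hreach
    obtain ⟨p⟩ := hreach.symm
    cases p with
    | nil => exact hne rfl
    | cons h q =>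
      have : s(w, (0 : Fin (n+1))) = s((0 : Fin (n+1)), w) := Sym2.eq_swap
      rw [← this] at h
      exact starGraph_no_adj n w _ (fun h' => hne h'.symm) h
  · subst hw
    intro hreach
    obtain ⟨p⟩ := hreach
    cases p with
    | nil => exact hne rfl
    | cons h q => exact starGraph_no_adj n v _ hne h

lemma exists_min_of_sums (C₀ : Finset ℝ) (hC : ∀ v ∈ C₀, 0 ≤ v) (Λ : Set ℝ)
    (hΛ : ∀ x ∈ Λ, ∃ m : ℝ → ℕ, x = ∑ v ∈ C₀, (m v : ℝ) * v)
    (hne : Λ.Nonempty) : ∃ x₀ ∈ Λ, ∀ x ∈ Λ, x₀ ≤ x := by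
  obtain ⟨b, hb⟩ := hne
  have hb0 : 0 ≤ b := by
    obtain ⟨m, hm⟩ := hΛ b hb
    rw [hm]
    exact Finset.sum_nonneg fun v hv => mul_nonneg (Nat.cast_nonneg _) (hC v hv)
  set K := C₀.sup fun v => ⌈b / v⌉₊ with hK
  set F : (↥C₀ → Fin (K + 1)) → ℝ := fun m => ∑ v ∈ C₀.attach, ((m v : ℕ) : ℝ) * (v : ℝ)
    with hF
  have hrange : ∀ x ∈ Λ, x ≤ b → x ∈ Set.range F := by
    intro x hx hxb
    obtain ⟨m, hm⟩ := hΛ x hx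
    have hbound : ∀ v : ↥C₀, 0 < (v : ℝ) → m (v : ℝ) < K + 1 := by
      rintro ⟨v, hv⟩ hvpos
      simp only at hvpos ⊢
      have h1 : (m v : ℝ) * v ≤ x := by
        rw [hm]
        refine Finset.single_le_sum (f := fun v => (m v : ℝ) * v) ?_ hv
        intro u hu
        exact mul_nonneg (Nat.cast_nonneg _) (hC u hu)
      have h2 : (m v : ℝ) ≤ b / v := by
        rw [le_div_iff₀ hvpos]
        linarith
      have h3 : (m v : ℝ) ≤ (⌈b / v⌉₊ : ℝ) := h2.trans (Nat.le_ceil _)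
      have h4 : m v ≤ ⌈b / v⌉₊ := by exact_mod_cast h3
      have h5 : ⌈b / v⌉₊ ≤ K := Finset.le_sup (f := fun v => ⌈b / v⌉₊) hv
      omega
    refine ⟨fun v => if h : 0 < (v : ℝ) then ⟨m (v : ℝ), hbound v h⟩ else 0, ?_⟩
    rw [hF, hm]
    simp only
    rw [← Finset.sum_attach C₀ (fun v => (m v : ℝ) * v)]
    refine Finset.sum_congr rfl fun v _ => ?_
    by_cases h : 0 < (v : ℝ)
    · rw [dif_pos h]
    · rw [dif_neg h]
      have hv0 : (v : ℝ) = 0 := le_antisymm (not_lt.1 h) (hC _ v.2)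
      simp [hv0]
  have hfin : (Λ ∩ Set.Iic b).Finite :=
    (Set.finite_range F).subset fun x ⟨hx1, hx2⟩ => hrange x hx1 hx2
  have hne' : (Λ ∩ Set.Iic b).Nonempty := ⟨b, hb, le_refl b⟩
  obtain ⟨x₀, hx₀, hmin⟩ := Set.exists_min_image _ id hfin hne'
  refine ⟨x₀, hx₀.1, fun x hx => ?_⟩
  by_cases hxb : x ≤ b
  · exact hmin x ⟨hx, hxb⟩
  · exact le_trans (hmin b ⟨hb, le_refl b⟩) (le_of_not_ge hxb)

noncomputable def stCost {T : Finset (Fin 2 → ℝ)} (S : SteinerTree 2 T) : ℝ :=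
  ∑ i, ∑ j, if S.G.Adj i j then l1norm (S.pos i - S.pos j) else 0

lemma len_eq_stCost {T : Finset (Fin 2 → ℝ)} (S : SteinerTree 2 T) :
    S.len l1norm = stCost S / 2 := rfl

lemma l1norm_nonneg {d : ℕ} (x : Fin d → ℝ) : 0 ≤ l1norm x :=
  Finset.sum_nonneg fun _ _ => abs_nonneg _

lemma vec2_eta (v : Fin 2 → ℝ) : ![v 0, v 1] = v := by
  funext k
  fin_cases k <;> simp

noncomputable def hanan (T : Finset (Fin 2 → ℝ)) : Finset (Fin 2 → ℝ) :=
  ((T.image fun t => t 0) ×ˢ (T.image fun t => t 1)).image fun p => ![p.1, p.2]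

lemma mem_hanan {T : Finset (Fin 2 → ℝ)} {v : Fin 2 → ℝ} :
    v ∈ hanan T ↔ (∃ t ∈ T, v 0 = t 0) ∧ (∃ t ∈ T, v 1 = t 1) := by
  constructor
  · intro hv
    obtain ⟨⟨a, b⟩, hab, rfl⟩ := Finset.mem_image.1 hv
    obtain ⟨ha, hb⟩ := Finset.mem_product.1 hab
    obtain ⟨t, ht, hta⟩ := Finset.mem_image.1 ha
    obtain ⟨u, hu, hub⟩ := Finset.mem_image.1 hb
    exact ⟨⟨t, ht, by simpa using hta.symm⟩, ⟨u, hu, by simpa using hub.symm⟩⟩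
  · rintro ⟨⟨t, ht, h0⟩, ⟨u, hu, h1⟩⟩
    refine Finset.mem_image.2 ⟨(v 0, v 1), ?_, vec2_eta v⟩
    exact Finset.mem_product.2 ⟨Finset.mem_image.2 ⟨t, ht, h0.symm⟩,
      Finset.mem_image.2 ⟨u, hu, h1.symm⟩⟩

lemma self_mem_hanan {T : Finset (Fin 2 → ℝ)} {t : Fin 2 → ℝ} (ht : t ∈ T) : t ∈ hanan T :=
  mem_hanan.2 ⟨⟨t, ht, rfl⟩, ⟨t, ht, rfl⟩⟩

lemma stCost_decompose {T : Finset (Fin 2 → ℝ)} (S : SteinerTree 2 T)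
    (pos : Fin S.n → (Fin 2 → ℝ)) :
    (∑ i, ∑ j, if S.G.Adj i j then l1norm (pos i - pos j) else 0)
      = cost1 (fun i j => if S.G.Adj i j then (1 : ℝ) else 0) (fun i => pos i 0)
        + cost1 (fun i j => if S.G.Adj i j then (1 : ℝ) else 0) (fun i => pos i 1) := by
  unfold cost1
  rw [← Finset.sum_add_distrib]
  refine Finset.sum_congr rfl fun i _ => ?_
  rw [← Finset.sum_add_distrib]
  refine Finset.sum_congr rfl fun j _ => ?_
  by_cases h : S.G.Adj i j
  · simp only [if_pos h, one_mul]
    rw [l1norm, Fin.sum_univ_two]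
    simp [Pi.sub_apply]
  · simp [if_neg h]

/-- Snap a Steiner tree onto the Hanan grid without increasing cost. -/
lemma snap_tree {T : Finset (Fin 2 → ℝ)} (hT : T.Nonempty) (S : SteinerTree 2 T) :
    ∃ S' : SteinerTree 2 T, (∀ i : Fin S'.n, S'.pos i ∈ hanan T) ∧ stCost S' ≤ stCost S := by
  obtain ⟨t₀, ht₀⟩ := hT
  set w : Fin S.n → Fin S.n → ℝ := fun i j => if S.G.Adj i j then 1 else 0 with hwdef
  have hw : ∀ i j, 0 ≤ w i j := fun i j => by
    by_cases h : S.G.Adj i j <;> simp [hwdef, h]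
  have hA0 : (T.image fun t => t 0).Nonempty := ⟨t₀ 0, Finset.mem_image_of_mem _ ht₀⟩
  have hA1 : (T.image fun t => t 1).Nonempty := ⟨t₀ 1, Finset.mem_image_of_mem _ ht₀⟩
  obtain ⟨g0, hg0A, hg0fix, hg0cost⟩ := snap_main w hw _ hA0 _ (fun i => S.pos i 0) le_rfl
  obtain ⟨g1, hg1A, hg1fix, hg1cost⟩ := snap_main w hw _ hA1 _ (fun i => S.pos i 1) le_rfl
  set pos' : Fin S.n → (Fin 2 → ℝ) := fun i => ![g0 i, g1 i] with hpos'
  have hcov : ∀ t ∈ T, ∃ i, pos' i = t := by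
    intro t ht
    obtain ⟨i, hi⟩ := S.hT t ht
    refine ⟨i, ?_⟩
    have h0 : g0 i = S.pos i 0 := hg0fix i (by
      rw [hi]; exact Finset.mem_image_of_mem _ ht)
    have h1 : g1 i = S.pos i 1 := hg1fix i (by
      rw [hi]; exact Finset.mem_image_of_mem _ ht)
    rw [hpos']
    simp only [h0, h1, hi]
    exact vec2_eta t
  refine ⟨⟨S.n, S.G, S.connected, S.acyclic, pos', hcov⟩, fun i => ?_, ?_⟩
  · refine mem_hanan.2 ⟨?_, ?_⟩
    · obtain ⟨t, ht, hta⟩ := Finset.mem_image.1 (hg0A i)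
      exact ⟨t, ht, by simp [hpos', hta.symm]⟩
    · obtain ⟨t, ht, hta⟩ := Finset.mem_image.1 (hg1A i)
      exact ⟨t, ht, by simp [hpos', hta.symm]⟩
  · show (∑ i, ∑ j, if S.G.Adj i j then l1norm (pos' i - pos' j) else 0) ≤ stCost S
    rw [stCost_decompose S pos']
    have hd : stCost S = cost1 w (fun i => S.pos i 0) + cost1 w (fun i => S.pos i 1) :=
      stCost_decompose S S.pos
    have e0 : (fun i => pos' i 0) = g0 := by funext i; simp [hpos']
    have e1 : (fun i => pos' i 1) = g1 := by funext i; simp [hpos']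
    rw [hd, e0, e1]
    exact add_le_add hg0cost hg1cost

noncomputable def costVals (T : Finset (Fin 2 → ℝ)) : Finset ℝ :=
  ((hanan T) ×ˢ (hanan T)).image fun p => l1norm (p.1 - p.2)

lemma costVals_nonneg {T : Finset (Fin 2 → ℝ)} : ∀ v ∈ costVals T, 0 ≤ v := by
  intro v hv
  obtain ⟨p, _, rfl⟩ := Finset.mem_image.1 hv
  exact l1norm_nonneg _

lemma zero_mem_costVals {T : Finset (Fin 2 → ℝ)} (hT : T.Nonempty) : (0 : ℝ) ∈ costVals T := by
  obtain ⟨t, ht⟩ := hT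
  refine Finset.mem_image.2 ⟨(t, t), Finset.mem_product.2 ⟨self_mem_hanan ht, self_mem_hanan ht⟩, ?_⟩
  simp [l1norm]

lemma stCost_repr {T : Finset (Fin 2 → ℝ)} (hT : T.Nonempty) (S : SteinerTree 2 T)
    (hS : ∀ i, S.pos i ∈ hanan T) :
    ∃ m : ℝ → ℕ, stCost S = ∑ v ∈ costVals T, (m v : ℝ) * v := by
  set g : Fin S.n × Fin S.n → ℝ :=
    fun p => if S.G.Adj p.1 p.2 then l1norm (S.pos p.1 - S.pos p.2) else 0 with hg
  set s : Finset (Fin S.n × Fin S.n) := Finset.univ ×ˢ Finset.univ with hs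
  have h1 : stCost S = ∑ p ∈ s, g p := by
    rw [hs, Finset.sum_product]
    rfl
  have hmaps : ∀ p ∈ s, g p ∈ costVals T := by
    intro p _
    by_cases h : S.G.Adj p.1 p.2
    · rw [hg]
      simp only [if_pos h]
      exact Finset.mem_image.2 ⟨(S.pos p.1, S.pos p.2),
        Finset.mem_product.2 ⟨hS p.1, hS p.2⟩, rfl⟩
    · rw [hg]
      simp only [if_neg h]
      exact zero_mem_costVals hT
  refine ⟨fun v => (s.filter fun p => g p = v).card, ?_⟩
  rw [h1, ← Finset.sum_fiberwise_of_maps_to hmaps g]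
  refine Finset.sum_congr rfl fun v _ => ?_
  rw [Finset.sum_congr rfl (fun p hp => (Finset.mem_filter.1 hp).2), Finset.sum_const,
    nsmul_eq_mul]

lemma exists_steinerTree {T : Finset (Fin 2 → ℝ)} (hT : T.Nonempty) :
    Nonempty (SteinerTree 2 T) := by
  obtain ⟨t₀, ht₀⟩ := hT
  refine ⟨⟨T.card + 1, starGraph T.card, starGraph_connected T.card, starGraph_acyclic T.card,
    Fin.cases t₀ (fun j => ((T.equivFin).symm j : Fin 2 → ℝ)), ?_⟩⟩
  intro t ht
  refine ⟨Fin.succ (T.equivFin ⟨t, ht⟩), ?_⟩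
  simp only [Fin.cases_succ]
  simp


/-- Hanan's theorem (d = 2): for any finite nonempty set of terminals in the plane
there is a minimum-length rectilinear (ℓ₁) Steiner tree all of whose Steiner points
lie on the Hanan grid: each Steiner point shares its x-coordinate with some terminal
and its y-coordinate with some terminal. -/
theorem stmt2 (T : Finset (Fin 2 → ℝ)) (hT : T.Nonempty) :
    ∃ S : SteinerTree 2 T,
      (∀ S' : SteinerTree 2 T, S.len l1norm ≤ S'.len l1norm) ∧
      ∀ i : Fin S.n, S.pos i ∉ T →
        (∃ t ∈ T, S.pos i 0 = t 0) ∧ (∃ t ∈ T, S.pos i 1 = t 1) := by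
  set Λ : Set ℝ :=
    {x | ∃ S : SteinerTree 2 T, (∀ i, S.pos i ∈ hanan T) ∧ stCost S = x} with hΛdef
  have hΛ : ∀ x ∈ Λ, ∃ m : ℝ → ℕ, x = ∑ v ∈ costVals T, (m v : ℝ) * v := by
    rintro x ⟨S, hS, rfl⟩
    obtain ⟨m, hm⟩ := stCost_repr hT S hS
    exact ⟨m, hm⟩
  have hne : Λ.Nonempty := by
    obtain ⟨S₀⟩ := exists_steinerTree hT
    obtain ⟨S₁, hS₁, _⟩ := snap_tree hT S₀
    exact ⟨stCost S₁, S₁, hS₁, rfl⟩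
  obtain ⟨x₀, hx₀Λ, hmin⟩ := exists_min_of_sums (costVals T) costVals_nonneg Λ hΛ hne
  obtain ⟨S, hSgrid, hScost⟩ := hx₀Λ
  refine ⟨S, ?_, ?_⟩
  · intro S'
    obtain ⟨S'', hS''grid, hS''cost⟩ := snap_tree hT S'
    have h1 : x₀ ≤ stCost S'' := hmin _ ⟨S'', hS''grid, rfl⟩
    rw [len_eq_stCost, len_eq_stCost, hScost]
    linarith
  · intro i _
    exact mem_hanan.1 (hSgrid i)
end

section
/- For the ℓ₁ norm in ℝ², at a degree-4 vertex of a minimum-length rectilinear Steiner tree, no two incident edges leave in the same axis direction; i.e., the four edges leave in the four distinct axis directions (up, down, left, right) when edges are axis-parallel. -/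
open scoped Classical

lemma l1_comm {d : ℕ} (x y : Fin d → ℝ) : l1norm (x - y) = l1norm (y - x) := by
  unfold l1norm
  exact Finset.sum_congr rfl fun k _ => by simp [abs_sub_comm]

lemma sign_helper {x y : ℝ} (hx : x ≠ 0) (h : Real.sign x = Real.sign y) :
    |x - y| < |y| ∨ |y - x| < |x| := by
  rcases lt_trichotomy x 0 with hx0 | hx0 | hx0
  · have hy0 : y < 0 := by
      rcases lt_trichotomy y 0 with h' | h' | h'
      · exact h'
      · rw [Real.sign_of_neg hx0, h', Real.sign_zero] at h; norm_num at h
      · rw [Real.sign_of_neg hx0, Real.sign_of_pos h'] at h; norm_num at h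
    rcases le_or_gt y x with hxy | hxy
    · left; rw [abs_of_nonneg (by linarith), abs_of_neg hy0]; linarith
    · right; rw [abs_of_nonneg (by linarith), abs_of_neg hx0]; linarith
  · exact absurd hx0 hx
  · have hy0 : 0 < y := by
      rcases lt_trichotomy y 0 with h' | h' | h'
      · rw [Real.sign_of_pos hx0, Real.sign_of_neg h'] at h; norm_num at h
      · rw [Real.sign_of_pos hx0, h', Real.sign_zero] at h; norm_num at h
      · exact h'
    rcases le_or_gt x y with hxy | hxy
    · left; rw [abs_of_nonpos (by linarith), abs_of_pos hy0]; linarith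
    · right; rw [abs_of_nonpos (by linarith), abs_of_pos hx0]; linarith

lemma exchange {T : Finset (Fin 2 → ℝ)} (S : SteinerTree 2 T)
    (hmin : ∀ S' : SteinerTree 2 T, S.len l1norm ≤ S'.len l1norm)
    {v j k : Fin S.n} (hvj : S.G.Adj v j) (hvk : S.G.Adj v k) (hjk : j ≠ k)
    (hlt : l1norm (S.pos j - S.pos k) < l1norm (S.pos v - S.pos k)) : False := by
  have hvj' : v ≠ j := S.G.ne_of_adj hvj
  have hvk' : v ≠ k := S.G.ne_of_adj hvk
  -- j–k is not an edge of the tree (else a triangle)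
  have hAjk : ¬ S.G.Adj j k := by
    intro h
    have hp2 : (SimpleGraph.Walk.cons hvj.symm (SimpleGraph.Walk.cons hvk
        SimpleGraph.Walk.nil)).IsPath := by
      simp [SimpleGraph.Walk.isPath_def, hvj', hvk', hjk, hvj'.symm, hvk'.symm, hjk.symm]
    have := S.acyclic.path_unique (SimpleGraph.Path.singleton h)
      ⟨SimpleGraph.Walk.cons hvj.symm (SimpleGraph.Walk.cons hvk SimpleGraph.Walk.nil), hp2⟩
    have hlen := congrArg (fun q : S.G.Path j k => q.val.length) this
    simp [SimpleGraph.Path.singleton] at hlen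
  -- new graph: delete v–k, add j–k
  set G' : SimpleGraph (Fin S.n) :=
    { Adj := fun a b => (S.G.Adj a b ∧ s(a,b) ≠ s(v,k)) ∨ s(a,b) = s(j,k)
      symm := by
        constructor
        intro a b hab
        rcases hab with ⟨h1, h2⟩ | h
        · exact Or.inl ⟨h1.symm, by rwa [Sym2.eq_swap]⟩
        · exact Or.inr (by rwa [Sym2.eq_swap])
      loopless := by
        constructor
        intro a hab
        rcases hab with ⟨h1, _⟩ | h
        · exact S.G.loopless.irrefl a h1
        · rw [Sym2.eq_iff] at h
          rcases h with ⟨rfl, rfl⟩ | ⟨rfl, rfl⟩ <;> exact hjk rfl } with hG'def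
  have hvjne : s(v,j) ≠ s(v,k) := by
    intro hh
    rw [Sym2.eq_iff] at hh
    rcases hh with ⟨-, h⟩ | ⟨h, -⟩
    · exact hjk h
    · exact hvk' h
  have hG'vj : G'.Adj v j := Or.inl ⟨hvj, hvjne⟩
  have hG'jk : G'.Adj j k := Or.inr rfl
  have hG'vk : ¬ G'.Adj v k := by
    rintro (⟨-, h⟩ | h)
    · exact h rfl
    · rw [Sym2.eq_iff] at h
      rcases h with ⟨h, -⟩ | ⟨h, -⟩
      · exact hvj' h
      · exact hvk' h
  have hreach : ∀ a b, S.G.Adj a b → G'.Reachable a b := by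
    intro a b hab
    by_cases he : s(a,b) = s(v,k)
    · have hr : G'.Reachable v k := (hG'vj.reachable).trans hG'jk.reachable
      rw [Sym2.eq_iff] at he
      rcases he with ⟨rfl, rfl⟩ | ⟨rfl, rfl⟩
      · exact hr
      · exact hr.symm
    · exact SimpleGraph.Adj.reachable (Or.inl ⟨hab, he⟩)
  have hconn : G'.Connected := by
    have hpre : G'.Preconnected := by
      intro a b
      obtain ⟨w⟩ := S.connected.preconnected a b
      induction w with
      | nil => exact SimpleGraph.Reachable.refl _
      | cons h p ih => exact (hreach _ _ h).trans ih
    haveI := S.connected.nonempty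
    exact ⟨hpre⟩
  have hacyc : G'.IsAcyclic := by
    intro u c hc
    by_cases he : s(j,k) ∈ c.edges
    · have hr : (G' \ SimpleGraph.fromEdgeSet {s(j,k)}).Reachable j k :=
        (SimpleGraph.adj_and_reachable_delete_edges_iff_exists_cycle.mpr ⟨u, c, hc, he⟩).2
      have hle : (G' \ SimpleGraph.fromEdgeSet {s(j,k)}) ≤
          (S.G \ SimpleGraph.fromEdgeSet {s(v,k)}) := by
        intro a b hab
        rw [SimpleGraph.sdiff_adj, SimpleGraph.fromEdgeSet_adj] at hab ⊢
        obtain ⟨h1, h2⟩ := hab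
        have hne : a ≠ b := G'.ne_of_adj h1
        have hjke : s(a,b) ≠ s(j,k) := by
          intro hh
          exact h2 ⟨by simpa using hh, hne⟩
        rcases h1 with ⟨hg, hvke⟩ | hh
        · exact ⟨hg, by intro hh2; exact hvke (by simpa using hh2.1)⟩
        · exact absurd hh hjke
      have hrjk : (S.G \ SimpleGraph.fromEdgeSet {s(v,k)}).Reachable j k := hr.mono hle
      have hrvj : (S.G \ SimpleGraph.fromEdgeSet {s(v,k)}).Adj v j := by
        rw [SimpleGraph.sdiff_adj, SimpleGraph.fromEdgeSet_adj]
        exact ⟨hvj, by intro hh; exact hvjne (by simpa using hh.1)⟩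
      have hrvk : (S.G \ SimpleGraph.fromEdgeSet {s(v,k)}).Reachable v k :=
        hrvj.reachable.trans hrjk
      obtain ⟨u', c', hc', -⟩ :=
        SimpleGraph.adj_and_reachable_delete_edges_iff_exists_cycle.mp ⟨hvk, hrvk⟩
      exact S.acyclic c' hc'
    · have hsub : ∀ e ∈ c.edges, e ∈ S.G.edgeSet := by
        intro e hec
        have h1 : e ∈ G'.edgeSet := c.edges_subset_edgeSet hec
        have h2 : e ≠ s(j,k) := fun hh => he (hh ▸ hec)
        revert h1 h2
        refine Sym2.ind (fun a b => ?_) e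
        intro h1 h2
        rw [SimpleGraph.mem_edgeSet] at h1 ⊢
        rcases h1 with ⟨hg, -⟩ | hh
        · exact hg
        · exact absurd hh h2
      exact S.acyclic (c.transfer S.G hsub) (hc.transfer hsub)
  have hwsymm : ∀ a b : Fin S.n, l1norm (S.pos a - S.pos b) = l1norm (S.pos b - S.pos a) :=
    fun a b => l1_comm _ _
  have key : ∑ p : Fin S.n × Fin S.n,
      ((if G'.Adj p.1 p.2 then l1norm (S.pos p.1 - S.pos p.2) else 0) -
        (if S.G.Adj p.1 p.2 then l1norm (S.pos p.1 - S.pos p.2) else 0)) =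
      2 * l1norm (S.pos j - S.pos k) - 2 * l1norm (S.pos v - S.pos k) := by
    rw [← Finset.sum_subset
      (Finset.subset_univ ({(v,k),(k,v),(j,k),(k,j)} : Finset (Fin S.n × Fin S.n)))]
    · have h1 : ((v,k) : Fin S.n × Fin S.n) ∉ ({(k,v),(j,k),(k,j)} : Finset _) := by
        simp [Prod.ext_iff, hvk', hvj', hvk'.symm]
      have h2 : ((k,v) : Fin S.n × Fin S.n) ∉ ({(j,k),(k,j)} : Finset _) := by
        simp [Prod.ext_iff, hjk.symm, hvj', hvj'.symm]
      have h3 : ((j,k) : Fin S.n × Fin S.n) ∉ ({(k,j)} : Finset _) := by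
        simp [Prod.ext_iff, hjk]
      rw [Finset.sum_insert h1, Finset.sum_insert h2, Finset.sum_insert h3,
        Finset.sum_singleton]
      have e1 : ¬ G'.Adj k v := fun hh => hG'vk hh.symm
      have e2 : G'.Adj k j := hG'jk.symm
      have e4 : ¬ S.G.Adj k j := fun hh => hAjk hh.symm
      simp only [if_pos hG'jk, if_pos e2, if_pos hvk, if_pos hvk.symm,
        if_neg hG'vk, if_neg e1, if_neg hAjk, if_neg e4]
      rw [hwsymm k v, hwsymm k j]
      ring
    · intro p _ hp
      obtain ⟨a, b⟩ := p
      simp only [Finset.mem_insert, Finset.mem_singleton, Prod.ext_iff] at hp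
      push_neg at hp
      obtain ⟨hp1, hp2, hp3, hp4⟩ := hp
      have hvke : s(a,b) ≠ s(v,k) := by
        intro hh
        rw [Sym2.eq_iff] at hh
        rcases hh with ⟨h5, h6⟩ | ⟨h5, h6⟩
        · exact (hp1 h5) h6
        · exact (hp2 h5) h6
      have hjke : s(a,b) ≠ s(j,k) := by
        intro hh
        rw [Sym2.eq_iff] at hh
        rcases hh with ⟨h5, h6⟩ | ⟨h5, h6⟩
        · exact (hp3 h5) h6
        · exact (hp4 h5) h6
      have hiff : G'.Adj a b ↔ S.G.Adj a b := by
        constructor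
        · rintro (⟨hg, -⟩ | hh)
          · exact hg
          · exact absurd hh hjke
        · intro hg
          exact Or.inl ⟨hg, hvke⟩
      show (if G'.Adj a b then l1norm (S.pos a - S.pos b) else 0) -
          (if S.G.Adj a b then l1norm (S.pos a - S.pos b) else 0) = 0
      rw [if_congr hiff rfl rfl]
      exact sub_self _
  have hsum : ∑ p : Fin S.n × Fin S.n,
      (if G'.Adj p.1 p.2 then l1norm (S.pos p.1 - S.pos p.2) else 0) =
      (∑ p : Fin S.n × Fin S.n,
        (if S.G.Adj p.1 p.2 then l1norm (S.pos p.1 - S.pos p.2) else 0)) +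
        (2 * l1norm (S.pos j - S.pos k) - 2 * l1norm (S.pos v - S.pos k)) := by
    rw [← key, Finset.sum_sub_distrib]
    ring
  have hsum2 : (∑ i, ∑ m, if G'.Adj i m then l1norm (S.pos i - S.pos m) else 0) =
      (∑ i, ∑ m, if S.G.Adj i m then l1norm (S.pos i - S.pos m) else 0) +
        (2 * l1norm (S.pos j - S.pos k) - 2 * l1norm (S.pos v - S.pos k)) := by
    rw [← Finset.sum_product', ← Finset.sum_product', Finset.univ_product_univ]
    exact hsum
  have hlen : (⟨S.n, G', hconn, hacyc, S.pos, S.hT⟩ : SteinerTree 2 T).len l1norm =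
      S.len l1norm + (l1norm (S.pos j - S.pos k) - l1norm (S.pos v - S.pos k)) := by
    simp only [SteinerTree.len]
    rw [hsum2]
    ring
  have := hmin ⟨S.n, G', hconn, hacyc, S.pos, S.hT⟩
  rw [hlen] at this
  linarith

/-- In a minimum-length rectilinear (ℓ₁) Steiner tree in the plane with
axis-parallel edges of positive length, no two edges incident to a common vertex
leave in the same axis direction: the sign vectors of the edge directions at any
vertex are pairwise distinct (among `±e₁, ±e₂`), and hence every vertex has
degree at most 4. -/
theorem stmt17 (T : Finset (Fin 2 → ℝ)) (S : SteinerTree 2 T)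
    (hmin : ∀ S' : SteinerTree 2 T, S.len l1norm ≤ S'.len l1norm)
    (haxis : ∀ i j, S.G.Adj i j → S.pos i 0 = S.pos j 0 ∨ S.pos i 1 = S.pos j 1)
    (hdist : ∀ i j, S.G.Adj i j → S.pos i ≠ S.pos j) :
    (∀ v j k, S.G.Adj v j → S.G.Adj v k → j ≠ k →
        (fun c => Real.sign (S.pos j c - S.pos v c))
          ≠ (fun c => Real.sign (S.pos k c - S.pos v c))) ∧
      ∀ v, S.degree v ≤ 4 := by
  have hcover : ∀ (c c' : Fin 2), c ≠ c' → ∀ x y : Fin 2 → ℝ,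
      x c = y c → x c' = y c' → x = y := by
    intro c c' hcc x y h1 h2
    funext i
    fin_cases c <;> fin_cases c' <;> fin_cases i <;> simp_all
  have key : ∀ v j k, S.G.Adj v j → S.G.Adj v k → j ≠ k →
      (fun c => Real.sign (S.pos j c - S.pos v c))
        ≠ (fun c => Real.sign (S.pos k c - S.pos v c)) := by
    intro v j k hvj hvk hjk heq
    have hs : ∀ c, Real.sign (S.pos j c - S.pos v c) = Real.sign (S.pos k c - S.pos v c) :=
      fun c => congrFun heq c
    have main : ∀ c c' : Fin 2, c ≠ c' →
        (∀ x : Fin 2 → ℝ, l1norm x = |x c| + |x c'|) →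
        S.pos v c = S.pos j c → False := by
      intro c c' hcc hsum hvjc
      have ha0 : S.pos j c - S.pos v c = 0 := by rw [hvjc]; ring
      have hb0 : S.pos k c - S.pos v c = 0 := by
        have h := hs c
        rw [ha0, Real.sign_zero] at h
        exact Real.sign_eq_zero_iff.mp h.symm
      have ha1 : S.pos j c' - S.pos v c' ≠ 0 := by
        intro h
        exact hdist v j hvj (hcover c c' hcc _ _ hvjc (by linarith))
      have hb1 : S.pos k c' - S.pos v c' ≠ 0 := by
        intro h
        exact hdist v k hvk (hcover c c' hcc _ _ (by linarith) (by linarith))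
      set x := S.pos j c' - S.pos v c' with hx
      set y := S.pos k c' - S.pos v c' with hy
      have e1 : l1norm (S.pos j - S.pos k) = |x - y| := by
        rw [hsum (S.pos j - S.pos k)]
        have g1 : (S.pos j - S.pos k) c = 0 := by
          simp only [Pi.sub_apply]; linarith
        have g2 : (S.pos j - S.pos k) c' = x - y := by
          simp only [Pi.sub_apply]; rw [hx, hy]; ring
        rw [g1, g2]; simp
      have e2 : l1norm (S.pos v - S.pos k) = |y| := by
        rw [hsum (S.pos v - S.pos k)]
        have g1 : (S.pos v - S.pos k) c = 0 := by
          simp only [Pi.sub_apply]; linarith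
        have g2 : (S.pos v - S.pos k) c' = -y := by
          simp only [Pi.sub_apply]; rw [hy]; ring
        rw [g1, g2]; simp
      have e3 : l1norm (S.pos v - S.pos j) = |x| := by
        rw [hsum (S.pos v - S.pos j)]
        have g1 : (S.pos v - S.pos j) c = 0 := by
          simp only [Pi.sub_apply]; linarith
        have g2 : (S.pos v - S.pos j) c' = -x := by
          simp only [Pi.sub_apply]; rw [hx]; ring
        rw [g1, g2]; simp
      have e4 : l1norm (S.pos k - S.pos j) = |y - x| := by
        rw [hsum (S.pos k - S.pos j)]
        have g1 : (S.pos k - S.pos j) c = 0 := by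
          simp only [Pi.sub_apply]; linarith
        have g2 : (S.pos k - S.pos j) c' = y - x := by
          simp only [Pi.sub_apply]; rw [hx, hy]; ring
        rw [g1, g2]; simp
      rcases sign_helper ha1 (hs c') with h | h
      · exact exchange S hmin hvj hvk hjk (by rw [e1, e2]; exact h)
      · exact exchange S hmin hvk hvj hjk.symm (by rw [e4, e3]; exact h)
    rcases haxis v j hvj with h | h
    · exact main 0 1 (by decide) (fun x => by rw [l1norm, Fin.sum_univ_two]) h
    · exact main 1 0 (by decide) (fun x => by rw [l1norm, Fin.sum_univ_two]; ring) h
  refine ⟨key, ?_⟩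
  intro v
  classical
  have hsgn : ∀ z : ℝ, z ≠ 0 → Real.sign z = 1 ∨ Real.sign z = -1 := by
    intro z hz
    rcases lt_trichotomy z 0 with h | h | h
    · right; exact Real.sign_of_neg h
    · exact absurd h hz
    · left; exact Real.sign_of_pos h
  have mem4 : ∀ m : Fin S.n, S.G.Adj v m →
      ((Real.sign (S.pos m 0 - S.pos v 0), Real.sign (S.pos m 1 - S.pos v 1)) : ℝ × ℝ) ∈
        ({(0,1),(0,-1),(1,0),(-1,0)} : Finset (ℝ × ℝ)) := by
    intro m hvm
    rcases haxis v m hvm with h | h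
    · have h0 : Real.sign (S.pos m 0 - S.pos v 0) = 0 := by
        rw [show S.pos m 0 - S.pos v 0 = 0 by linarith, Real.sign_zero]
      have h1 : S.pos m 1 - S.pos v 1 ≠ 0 := by
        intro hz
        exact hdist v m hvm (hcover 0 1 (by decide) _ _ h (by linarith))
      rcases hsgn _ h1 with h2 | h2 <;> simp [h0, h2, Finset.mem_insert, Prod.ext_iff]
    · have h0 : Real.sign (S.pos m 1 - S.pos v 1) = 0 := by
        rw [show S.pos m 1 - S.pos v 1 = 0 by linarith, Real.sign_zero]
      have h1 : S.pos m 0 - S.pos v 0 ≠ 0 := by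
        intro hz
        exact hdist v m hvm (hcover 1 0 (by decide) _ _ h (by linarith))
      rcases hsgn _ h1 with h2 | h2 <;> simp [h0, h2, Finset.mem_insert, Prod.ext_iff]
  set Xf : Finset (ℝ × ℝ) := {(0,1),(0,-1),(1,0),(-1,0)} with hXf
  let F : {m // S.G.Adj v m} → {p // p ∈ Xf} :=
    fun m => ⟨(Real.sign (S.pos m.1 0 - S.pos v 0), Real.sign (S.pos m.1 1 - S.pos v 1)),
      mem4 m.1 m.2⟩
  have hFinj : Function.Injective F := by
    rintro ⟨a, ha⟩ ⟨b, hb⟩ hab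
    have hab' : ((Real.sign (S.pos a 0 - S.pos v 0), Real.sign (S.pos a 1 - S.pos v 1)) : ℝ × ℝ)
        = (Real.sign (S.pos b 0 - S.pos v 0), Real.sign (S.pos b 1 - S.pos v 1)) :=
      congrArg Subtype.val hab
    by_contra hne
    have hne' : a ≠ b := fun h => hne (by simpa using h)
    apply key v a b ha hb hne'
    funext c
    fin_cases c
    · simpa using congrArg Prod.fst hab'
    · simpa using congrArg Prod.snd hab'
  have hle : Nat.card {m // S.G.Adj v m} ≤ Nat.card {p // p ∈ Xf} :=
    Nat.card_le_card_of_injective F hFinj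
  have hXcard : Nat.card {p // p ∈ Xf} ≤ 4 := by
    rw [Nat.card_eq_finsetCard]
    rw [hXf]
    refine le_trans (Finset.card_insert_le _ _) ?_
    refine Nat.succ_le_succ ?_
    refine le_trans (Finset.card_insert_le _ _) ?_
    refine Nat.succ_le_succ ?_
    refine le_trans (Finset.card_insert_le _ _) ?_
    simp
  exact le_trans hle hXcard
end
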